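/- Let σ be a type of variables, S = ℂ[σ] the polynomial ring, and let w : σ → ℤⁿ and w' : σ → ℕ be weight functions, extended additively to monomials, giving a ℤⁿ-weighted grading and an ℕ-weighted grading of S. For a nonzero p ∈ S let hc'(p) denote the w'-homogeneous component of p of highest w'-weight. Let J ⊆ S be an ideal that is homogeneous with respect to the ℤⁿ-grading (every ℤⁿ-homogeneous component of every element of J lies in J), and let hc'(J) be the ideal generated by {hc'(p) : 0 ≠ p ∈ J}. For d ∈ ℤⁿ, let (S/J)_d denote the image in S/J of the space S_d of w-homogeneous polynomials of weight d, and similarly for (S/hc'(J))_d. If (S/J)_d is finite-dimensional, then dim (S/hc'(J))_d ≥ dim (S/J)_d. -/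

import Mathlib

open scoped BigOperators

/-- `hcomp' w' p` is the `w'`-homogeneous component of `p` of highest `w'`-weight;
for `p ≠ 0` this is the nonzero top weighted-homogeneous component `hc'(p)`. -/
noncomputable def hcomp' {σ : Type*} (w' : σ → ℕ) (p : MvPolynomial σ ℂ) :
    MvPolynomial σ ℂ :=
  MvPolynomial.weightedHomogeneousComponent w' (MvPolynomial.weightedTotalDegree w' p) p

/-- The image in `S ⧸ J` of the space of `w`-homogeneous polynomials of weight `d`. -/
noncomputable def gradedPiece {σ : Type*} {n : ℕ} (w : σ → Fin n → ℤ)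
    (J : Ideal (MvPolynomial σ ℂ)) (d : Fin n → ℤ) :
    Submodule ℂ (MvPolynomial σ ℂ ⧸ J) :=
  (MvPolynomial.weightedHomogeneousSubmodule ℂ w d).map
    (Ideal.Quotient.mkₐ ℂ J).toLinearMap

open MvPolynomial Finsupp

namespace HCAux


variable {σ : Type*}

/-- weighted total degree ≤ e iff all monomial weights ≤ e -/
lemma wTD_le_iff (w' : σ → ℕ) (p : MvPolynomial σ ℂ) (e : ℕ) :
    weightedTotalDegree w' p ≤ e ↔ ∀ m ∈ p.support, weight w' m ≤ e :=
  Finset.sup_le_iff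

lemma wTD_homog_le {w' : σ → ℕ} {p : MvPolynomial σ ℂ} {a : ℕ}
    (hp : p.IsWeightedHomogeneous w' a) : weightedTotalDegree w' p ≤ a := by
  rw [wTD_le_iff]
  intro m hm
  exact le_of_eq (hp (MvPolynomial.mem_support_iff.mp hm))

lemma wTD_zero_le (w' : σ → ℕ) (e : ℕ) :
    weightedTotalDegree w' (0 : MvPolynomial σ ℂ) ≤ e := by
  rw [weightedTotalDegree_zero]; exact bot_le

lemma wTD_add_le {w' : σ → ℕ} {p q : MvPolynomial σ ℂ} {e : ℕ}
    (hp : weightedTotalDegree w' p ≤ e) (hq : weightedTotalDegree w' q ≤ e) :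
    weightedTotalDegree w' (p + q) ≤ e := by
  classical
  rw [wTD_le_iff] at *
  intro m hm
  rcases Finset.mem_union.mp (MvPolynomial.support_add hm) with h | h
  · exact hp m h
  · exact hq m h

lemma wTD_sub_le {w' : σ → ℕ} {p q : MvPolynomial σ ℂ} {e : ℕ}
    (hp : weightedTotalDegree w' p ≤ e) (hq : weightedTotalDegree w' q ≤ e) :
    weightedTotalDegree w' (p - q) ≤ e := by
  classical
  rw [wTD_le_iff] at *
  intro m hm
  rcases Finset.mem_union.mp (MvPolynomial.support_sub σ p q hm) with h | h
  · exact hp m h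
  · exact hq m h

lemma wTD_sum_le {w' : σ → ℕ} {α : Type*} (s : Finset α) (f : α → MvPolynomial σ ℂ) {e : ℕ}
    (h : ∀ i ∈ s, weightedTotalDegree w' (f i) ≤ e) :
    weightedTotalDegree w' (∑ i ∈ s, f i) ≤ e :=
  Finset.sum_induction f (fun x => weightedTotalDegree w' x ≤ e)
    (fun _ _ => wTD_add_le) (wTD_zero_le w' e) h

lemma wTD_homog_mul_le {w' : σ → ℕ} {h s : MvPolynomial σ ℂ} {a b : ℕ}
    (hh : h.IsWeightedHomogeneous w' a) (hs : weightedTotalDegree w' s ≤ b) :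
    weightedTotalDegree w' (h * s) ≤ a + b := by
  classical
  rw [wTD_le_iff]
  intro m hm
  obtain ⟨u, hu, v, hv, rfl⟩ := Finset.mem_add.mp (MvPolynomial.support_mul h s hm)
  rw [map_add]
  exact add_le_add (le_of_eq (hh (MvPolynomial.mem_support_iff.mp hu)))
    (le_trans (le_weightedTotalDegree w' hv) hs)

lemma wTD_component_le {M₂ : Type*} [AddCommMonoid M₂] (w' : σ → ℕ) (w₂ : σ → M₂) (d₂ : M₂)
    (p : MvPolynomial σ ℂ) :
    weightedTotalDegree w' (weightedHomogeneousComponent w₂ d₂ p) ≤ weightedTotalDegree w' p := by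
  classical
  rw [wTD_le_iff]
  intro m hm
  apply le_weightedTotalDegree
  rw [MvPolynomial.mem_support_iff] at hm ⊢
  intro h
  apply hm
  rw [coeff_weightedHomogeneousComponent]
  split_ifs <;> simp [h]

lemma componentMem {M₂ : Type*} [AddCommMonoid M₂] {n : ℕ} {w : σ → Fin n → ℤ}
    {w₂ : σ → M₂} {p : MvPolynomial σ ℂ} {d : Fin n → ℤ}
    (h : p ∈ weightedHomogeneousSubmodule ℂ w d) (d₂ : M₂) :
    weightedHomogeneousComponent w₂ d₂ p ∈ weightedHomogeneousSubmodule ℂ w d := by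
  classical
  rw [MvPolynomial.mem_weightedHomogeneousSubmodule] at h ⊢
  intro m hm
  rw [coeff_weightedHomogeneousComponent] at hm
  split_ifs at hm
  · exact h hm
  · exact absurd rfl hm

lemma wHC_comm {M₁ M₂ : Type*} [AddCommMonoid M₁] [AddCommMonoid M₂]
    (w₁ : σ → M₁) (w₂ : σ → M₂) (d₁ : M₁) (d₂ : M₂) (p : MvPolynomial σ ℂ) :
    weightedHomogeneousComponent w₁ d₁ (weightedHomogeneousComponent w₂ d₂ p) =
      weightedHomogeneousComponent w₂ d₂ (weightedHomogeneousComponent w₁ d₁ p) := by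
  classical
  ext m
  simp only [coeff_weightedHomogeneousComponent]
  split_ifs <;> rfl

lemma wHC_monomial (w' : σ → ℕ) (e : ℕ) (u : σ →₀ ℕ) (c : ℂ) :
    weightedHomogeneousComponent w' e (monomial u c) =
      if weight w' u = e then monomial u c else 0 := by
  rw [weightedHomogeneousComponent_of_mem
    ((MvPolynomial.mem_weightedHomogeneousSubmodule ℂ w' (weight w' u) _).mpr
      (isWeightedHomogeneous_monomial w' u c rfl))]
  by_cases h : weight w' u = e
  · subst h; simp
  · rw [if_neg (Ne.symm h), if_neg h]

lemma wHC_mul (w' : σ → ℕ) (e : ℕ) (r s : MvPolynomial σ ℂ) :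
    weightedHomogeneousComponent w' e (r * s) =
      ∑ a ∈ Finset.range (e + 1),
        weightedHomogeneousComponent w' a r * weightedHomogeneousComponent w' (e - a) s := by
  induction r using MvPolynomial.induction_on' with
  | add p q hp hq =>
      simp only [add_mul, map_add, hp, hq, ← Finset.sum_add_distrib]
  | monomial u c =>
    induction s using MvPolynomial.induction_on' with
    | add p q hp hq =>
        simp only [mul_add, map_add, hp, hq, ← Finset.sum_add_distrib]
    | monomial v c' =>
      rw [monomial_mul, wHC_monomial]
      simp only [wHC_monomial]
      by_cases hu : weight w' u ≤ e
      · rw [Finset.sum_eq_single (weight w' u)]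
        · rw [if_pos rfl, map_add]
          by_cases hv : weight w' v = e - weight w' u
          · rw [if_pos hv, if_pos (by omega), monomial_mul]
          · rw [if_neg hv, if_neg (by omega), mul_zero]
        · intro a _ ha
          rw [if_neg (fun h => ha h.symm), zero_mul]
        · intro h
          exact absurd (Finset.mem_range.mpr (by omega)) h
      · rw [map_add, if_neg (by omega), eq_comm]
        apply Finset.sum_eq_zero
        intro a ha
        have ha' := Finset.mem_range.mp ha
        rw [if_neg (by omega), zero_mul]

lemma sum_wHC_of_le {w' : σ → ℕ} {p : MvPolynomial σ ℂ} {e : ℕ}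
    (h : weightedTotalDegree w' p ≤ e) :
    ∑ i ∈ Finset.range (e + 1), weightedHomogeneousComponent w' i p = p := by
  classical
  ext m
  rw [MvPolynomial.coeff_sum]
  simp only [coeff_weightedHomogeneousComponent]
  rw [Finset.sum_ite_eq (Finset.range (e + 1)) (weight w' m)]
  by_cases hc : coeff m p = 0
  · split_ifs <;> simp [hc]
  · have := (wTD_le_iff w' p e).mp h m (MvPolynomial.mem_support_iff.mpr hc)
    rw [if_pos (Finset.mem_range.mpr (by omega))]

lemma wTD_lt_step {w' : σ → ℕ} {p : MvPolynomial σ ℂ} {e : ℕ}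
    (h1 : weightedTotalDegree w' p ≤ e + 1)
    (h2 : weightedHomogeneousComponent w' (e + 1) p = 0) :
    weightedTotalDegree w' p ≤ e := by
  classical
  rw [wTD_le_iff] at h1 ⊢
  intro m hm
  have hle := h1 m hm
  by_contra hlt
  have hw : weight w' m = e + 1 := by omega
  have : coeff m (weightedHomogeneousComponent w' (e + 1) p) = coeff m p := by
    rw [coeff_weightedHomogeneousComponent, if_pos hw]
  rw [h2, coeff_zero] at this
  exact (MvPolynomial.mem_support_iff.mp hm) this.symm

lemma zero_of_wTD_le_zero {w' : σ → ℕ} {p : MvPolynomial σ ℂ}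
    (h1 : weightedTotalDegree w' p ≤ 0)
    (h2 : weightedHomogeneousComponent w' 0 p = 0) : p = 0 := by
  classical
  ext m
  by_cases hc : coeff m p = 0
  · simpa using hc
  · have hw := (wTD_le_iff w' p 0).mp h1 m (MvPolynomial.mem_support_iff.mpr hc)
    have : coeff m (weightedHomogeneousComponent w' 0 p) = coeff m p := by
      rw [coeff_weightedHomogeneousComponent, if_pos (by omega)]
    rw [h2, coeff_zero] at this
    exact absurd this.symm hc


lemma lemA (w' : σ → ℕ) (J : Ideal (MvPolynomial σ ℂ)) {g : MvPolynomial σ ℂ}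
    (hg : g ∈ Ideal.span {q : MvPolynomial σ ℂ | ∃ p ∈ J, p ≠ 0 ∧ q = hcomp' w' p}) (e : ℕ) :
    ∃ q ∈ J, weightedTotalDegree w' q ≤ e ∧
      weightedHomogeneousComponent w' e q = weightedHomogeneousComponent w' e g := by
  revert e
  refine Submodule.span_induction ?_ ?_ ?_ ?_ hg
  · rintro x ⟨p, hpJ, -, rfl⟩ e
    by_cases he : e = weightedTotalDegree w' p
    · subst he
      refine ⟨p, hpJ, le_rfl, ?_⟩
      exact (IsWeightedHomogeneous.weightedHomogeneousComponent_same
        (weightedHomogeneousComponent_isWeightedHomogeneous (weightedTotalDegree w' p) p)).symm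
    · refine ⟨0, J.zero_mem, wTD_zero_le w' e, ?_⟩
      rw [map_zero]
      exact (IsWeightedHomogeneous.weightedHomogeneousComponent_ne e
        (weightedHomogeneousComponent_isWeightedHomogeneous (weightedTotalDegree w' p) p) he).symm
  · intro e
    exact ⟨0, J.zero_mem, wTD_zero_le w' e, by simp⟩
  · rintro x y _ _ ihx ihy e
    obtain ⟨q1, h1J, h1d, h1c⟩ := ihx e
    obtain ⟨q2, h2J, h2d, h2c⟩ := ihy e
    exact ⟨q1 + q2, J.add_mem h1J h2J, wTD_add_le h1d h2d,
      by rw [map_add, map_add, h1c, h2c]⟩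
  · rintro r x _ ihx e
    choose qq hqJ hqd hqc using ihx
    refine ⟨∑ a ∈ Finset.range (e + 1), weightedHomogeneousComponent w' a r * qq (e - a),
      Submodule.sum_mem _ fun a _ => Ideal.mul_mem_left _ _ (hqJ _), ?_, ?_⟩
    · apply wTD_sum_le
      intro a ha
      have ha' := Finset.mem_range.mp ha
      exact le_trans (wTD_homog_mul_le
        (weightedHomogeneousComponent_isWeightedHomogeneous a r) (hqd (e - a))) (by omega)
    · rw [smul_eq_mul, wHC_mul, map_sum]
      refine Finset.sum_congr rfl fun a ha => ?_
      rw [wHC_mul, Finset.sum_eq_single a]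
      · rw [weightedHomogeneousComponent_of_mem (weightedHomogeneousComponent_mem w' r a),
          if_pos rfl, hqc]
      · intro b _ hba
        rw [weightedHomogeneousComponent_of_mem (weightedHomogeneousComponent_mem w' r a),
          if_neg hba, zero_mul]
      · intro h; exact absurd ha h

lemma spanning {n : ℕ} (w : σ → Fin n → ℤ) (w' : σ → ℕ)
    (J : Ideal (MvPolynomial σ ℂ))
    (hJ : ∀ p ∈ J, ∀ d : Fin n → ℤ, weightedHomogeneousComponent w d p ∈ J)
    (d : Fin n → ℤ) {ι : Type*} (v : ι → MvPolynomial σ ℂ)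
    (hv1 : ∀ i, v i ∈ weightedHomogeneousSubmodule ℂ w d)
    (hv2 : ∀ i, ∃ e, v i ∈ weightedHomogeneousSubmodule ℂ w' e)
    (hspanK : gradedPiece w (Ideal.span {q : MvPolynomial σ ℂ | ∃ p ∈ J, p ≠ 0 ∧ q = hcomp' w' p}) d ≤
      Submodule.span ℂ (Set.range fun i => Ideal.Quotient.mkₐ ℂ
        (Ideal.span {q : MvPolynomial σ ℂ | ∃ p ∈ J, p ≠ 0 ∧ q = hcomp' w' p}) (v i))) :
    gradedPiece w J d ≤
      Submodule.span ℂ (Set.range fun i => Ideal.Quotient.mkₐ ℂ J (v i)) := by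
  set K := Ideal.span {q : MvPolynomial σ ℂ | ∃ p ∈ J, p ≠ 0 ∧ q = hcomp' w' p} with hK
  set ΦK := Ideal.Quotient.mkₐ ℂ K with hΦK
  set ΦJ := Ideal.Quotient.mkₐ ℂ J with hΦJ
  set spanJ := Submodule.span ℂ (Set.range fun i => ΦJ (v i)) with hspanJ
  have step : ∀ (m : ℕ) (f : MvPolynomial σ ℂ), f ∈ weightedHomogeneousSubmodule ℂ w d →
      weightedTotalDegree w' f ≤ m →
      ∃ f', f' ∈ weightedHomogeneousSubmodule ℂ w d ∧ weightedTotalDegree w' f' ≤ m ∧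
        weightedHomogeneousComponent w' m f' = 0 ∧ ΦJ f - ΦJ f' ∈ spanJ := by
    intro m f hfd hfm
    have hfmd : weightedHomogeneousComponent w' m f ∈ weightedHomogeneousSubmodule ℂ w d :=
      componentMem hfd m
    have hmem : ΦK (weightedHomogeneousComponent w' m f) ∈ gradedPiece w K d :=
      Submodule.mem_map.mpr ⟨_, hfmd, rfl⟩
    obtain ⟨c, hc⟩ := Finsupp.mem_span_range_iff_exists_finsupp.mp (hspanK hmem)
    set t := c.sum fun i a => a • weightedHomogeneousComponent w' m (v i) with htdef
    have htd : t ∈ weightedHomogeneousSubmodule ℂ w d :=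
      Submodule.finsuppSum_mem _ _ _ _ fun i _ => Submodule.smul_mem _ _ (componentMem (hv1 i) m)
    have htm : t ∈ weightedHomogeneousSubmodule ℂ w' m :=
      Submodule.finsuppSum_mem _ _ _ _ fun i _ =>
        Submodule.smul_mem _ _ (weightedHomogeneousComponent_mem w' (v i) m)
    have hKmem : weightedHomogeneousComponent w' m f - c.sum (fun i a => a • v i) ∈ K := by
      have h0 : ΦK (weightedHomogeneousComponent w' m f - c.sum fun i a => a • v i) = 0 := by
        rw [map_sub, map_finsuppSum]
        simp only [map_smul]
        rw [hc]
        exact sub_self _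
      have h0' : Ideal.Quotient.mk K (weightedHomogeneousComponent w' m f
          - c.sum fun i a => a • v i) = 0 := by
        rwa [hΦK, Ideal.Quotient.mkₐ_eq_mk] at h0
      exact Ideal.Quotient.eq_zero_iff_mem.mp h0'
    obtain ⟨q, hqJ, hqd, hqc⟩ := lemA w' J hKmem m
    have hqc' : weightedHomogeneousComponent w' m q
        = weightedHomogeneousComponent w' m f - t := by
      rw [hqc, map_sub, map_finsuppSum]
      congr 1
      · exact IsWeightedHomogeneous.weightedHomogeneousComponent_same
          (weightedHomogeneousComponent_isWeightedHomogeneous m f)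
      · simp only [map_smul, htdef]
    set q' := weightedHomogeneousComponent w d q with hq'def
    have hq'J : q' ∈ J := hJ q hqJ d
    have hq'd : weightedTotalDegree w' q' ≤ m := le_trans (wTD_component_le w' w d q) hqd
    have hftd : weightedHomogeneousComponent w' m f - t ∈ weightedHomogeneousSubmodule ℂ w d :=
      sub_mem hfmd htd
    have hq'c : weightedHomogeneousComponent w' m q'
        = weightedHomogeneousComponent w' m f - t := by
      rw [hq'def, wHC_comm, hqc']
      exact IsWeightedHomogeneous.weightedHomogeneousComponent_same
        ((MvPolynomial.mem_weightedHomogeneousSubmodule _ _ _ _).mp hftd)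
    refine ⟨f - t - q', sub_mem (sub_mem hfd htd) (weightedHomogeneousComponent_mem w q d),
      ?_, ?_, ?_⟩
    · exact wTD_sub_le (wTD_sub_le hfm (wTD_homog_le
        ((MvPolynomial.mem_weightedHomogeneousSubmodule _ _ _ _).mp htm))) hq'd
    · rw [map_sub, map_sub, hq'c, IsWeightedHomogeneous.weightedHomogeneousComponent_same
        ((MvPolynomial.mem_weightedHomogeneousSubmodule _ _ _ _).mp htm)]
      exact sub_self _
    · have hq'0 : ΦJ q' = 0 := by
        have := Ideal.Quotient.eq_zero_iff_mem.mpr hq'J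
        rwa [hΦJ, Ideal.Quotient.mkₐ_eq_mk]
      have hdiff : ΦJ f - ΦJ (f - t - q') = ΦJ t := by
        rw [← map_sub]
        have h1 : f - (f - t - q') = t + q' := by ring
        rw [h1, map_add, hq'0, add_zero]
      rw [hdiff, htdef, map_finsuppSum]
      apply Submodule.finsuppSum_mem
      intro i _
      rw [map_smul]
      obtain ⟨ei, hei⟩ := hv2 i
      rw [weightedHomogeneousComponent_of_mem hei]
      by_cases hm : m = ei
      · rw [if_pos hm]
        exact Submodule.smul_mem _ _ (Submodule.subset_span ⟨i, rfl⟩)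
      · rw [if_neg hm, map_zero, smul_zero]
        exact Submodule.zero_mem _
  have key : ∀ (m : ℕ) (f : MvPolynomial σ ℂ), f ∈ weightedHomogeneousSubmodule ℂ w d →
      weightedTotalDegree w' f ≤ m → ΦJ f ∈ spanJ := by
    intro m
    induction m with
    | zero =>
      intro f hf h0
      obtain ⟨f', _, hf'd, hf'c, hdiff⟩ := step 0 f hf h0
      rwa [zero_of_wTD_le_zero hf'd hf'c, map_zero, sub_zero] at hdiff
    | succ m ih =>
      intro f hf h
      obtain ⟨f', h1, h2, h3, hdiff⟩ := step (m + 1) f hf h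
      have hmem := ih f' h1 (wTD_lt_step h2 h3)
      have heq : ΦJ f = (ΦJ f - ΦJ f') + ΦJ f' := by ring
      rw [heq]
      exact Submodule.add_mem _ hdiff hmem
  intro x hx
  obtain ⟨f, hf, rfl⟩ := Submodule.mem_map.mp hx
  exact key (weightedTotalDegree w' f) f hf le_rfl

end HCAux

/-- let `S = ℂ[σ]` with a `ℤⁿ`-weighted grading given by `w` and an
`ℕ`-weighted grading given by `w'`.  Let `J ⊆ S` be an ideal homogeneous with respect
to the `ℤⁿ`-grading and let `hc'(J)` be the ideal generated by the highest
`w'`-components of the nonzero elements of `J`.  If `(S/J)_d` is finite-dimensional,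
then `dim (S/hc'(J))_d ≥ dim (S/J)_d`. -/
theorem dim_quotient_hc_ge (σ : Type*) (n : ℕ) (w : σ → Fin n → ℤ) (w' : σ → ℕ)
    (J : Ideal (MvPolynomial σ ℂ))
    (hJ : ∀ p ∈ J, ∀ d : Fin n → ℤ,
      MvPolynomial.weightedHomogeneousComponent w d p ∈ J)
    (d : Fin n → ℤ)
    (hfin : FiniteDimensional ℂ (gradedPiece w J d)) :
    Module.rank ℂ (gradedPiece w J d) ≤
      Module.rank ℂ
        (gradedPiece w
          (Ideal.span {q : MvPolynomial σ ℂ | ∃ p ∈ J, p ≠ 0 ∧ q = hcomp' w' p}) d) := by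
  classical
  set K := Ideal.span {q : MvPolynomial σ ℂ | ∃ p ∈ J, p ≠ 0 ∧ q = hcomp' w' p} with hK
  set X := (⇑(Ideal.Quotient.mkₐ ℂ K)) '' {f : MvPolynomial σ ℂ |
      f ∈ weightedHomogeneousSubmodule ℂ w d ∧
        ∃ e, f ∈ weightedHomogeneousSubmodule ℂ w' e} with hX
  have hX1 : Submodule.span ℂ X = gradedPiece w K d := by
    apply le_antisymm
    · rw [Submodule.span_le]
      rintro x ⟨f, ⟨hf, -⟩, rfl⟩
      exact Submodule.mem_map.mpr ⟨f, hf, rfl⟩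
    · rintro x hx
      obtain ⟨f, hf, rfl⟩ := Submodule.mem_map.mp hx
      have hsum := HCAux.sum_wHC_of_le (w' := w') (p := f) (e := weightedTotalDegree w' f) le_rfl
      have hrw : (Ideal.Quotient.mkₐ ℂ K).toLinearMap f =
          ∑ i ∈ Finset.range (weightedTotalDegree w' f + 1),
            (Ideal.Quotient.mkₐ ℂ K).toLinearMap (weightedHomogeneousComponent w' i f) := by
        rw [← map_sum, hsum]
      rw [hrw]
      apply Submodule.sum_mem
      intro i _
      apply Submodule.subset_span
      exact ⟨weightedHomogeneousComponent w' i f,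
        ⟨HCAux.componentMem hf i, ⟨i, weightedHomogeneousComponent_mem w' f i⟩⟩, rfl⟩
  obtain ⟨b, hbX, hbspan, hbli⟩ := exists_linearIndependent ℂ X
  have hbrank : Module.rank ℂ (gradedPiece w K d) = Cardinal.mk b := by
    rw [← hX1, ← hbspan]
    exact rank_span_set hbli
  have hchoice : ∀ y : b, ∃ f : MvPolynomial σ ℂ,
      f ∈ weightedHomogeneousSubmodule ℂ w d ∧
        (∃ e, f ∈ weightedHomogeneousSubmodule ℂ w' e) ∧
        Ideal.Quotient.mkₐ ℂ K f = (y : MvPolynomial σ ℂ ⧸ K) := by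
    intro y
    obtain ⟨f, ⟨h1, h2⟩, h3⟩ := hbX y.2
    exact ⟨f, h1, h2, h3⟩
  choose v hv1 hv2 hv3 using hchoice
  have hrange : (Set.range fun y : b => Ideal.Quotient.mkₐ ℂ K (v y)) = b := by
    have h : (fun y : b => Ideal.Quotient.mkₐ ℂ K (v y))
        = fun y : b => (y : MvPolynomial σ ℂ ⧸ K) := funext fun y => hv3 y
    rw [h, Subtype.range_coe]
  have hspanK : gradedPiece w K d ≤
      Submodule.span ℂ (Set.range fun y : b => Ideal.Quotient.mkₐ ℂ K (v y)) := by
    rw [hrange, hbspan, hX1]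
  have hle := HCAux.spanning w w' J hJ d v hv1 hv2 hspanK
  calc Module.rank ℂ (gradedPiece w J d)
      ≤ Module.rank ℂ (Submodule.span ℂ
          (Set.range fun y : b => Ideal.Quotient.mkₐ ℂ J (v y))) := Submodule.rank_mono hle
    _ ≤ Cardinal.mk (Set.range fun y : b => Ideal.Quotient.mkₐ ℂ J (v y)) := rank_span_le _
    _ ≤ Cardinal.mk b := Cardinal.mk_range_le
    _ = Module.rank ℂ (gradedPiece w K d) := hbrank.symm
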